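/- arXiv:1411.1380 — 4 statements merged into one kernel-verified Lean document; each statement's English description precedes it below -/
import Mathlib

section
/- Let N, W be positive integers with gcd(N, W) = 1, W ≤ N, and let g be the N-periodic indicator of {0,...,W-1}. If x, x' : Z/NZ → C satisfy Σ_{n=m-W+1}^{m} |x[n]|² = Σ_{n=m-W+1}^{m} |x'[n]|² for all m ∈ Z/NZ (indices mod N), then |x[n]| = |x'[n]| for all n. -/
/-!
Put `d n = |x[n]|² - |x'[n]|²`; all its length-`W` window sums vanish. Comparing the two ways of
splitting a window of length `W + 1` shows that `d` is `W`-periodic, and since `W` is a unit in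
`ZMod N` its multiples exhaust `ZMod N`, so `d` is constant. A window sum of a constant `c` is
`W • c`, hence `c = 0`.
-/

open Finset

theorem Function.periodic_of_sum_range_sub_eq_zero {R M : Type*} [AddCommGroupWithOne R]
    [AddCommMonoid M] {f : R → M} {W : ℕ} (hf : ∀ m, ∑ j ∈ range W, f (m - j) = 0) :
    Function.Periodic f W := by
  intro m
  have hsplit_last : ∑ j ∈ range (W + 1), f (m + W - j) = f m := by
    rw [sum_range_succ, hf, zero_add, add_sub_cancel_right]
  have hsplit_first : ∑ j ∈ range (W + 1), f (m + W - j) = f (m + W) := by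
    have hshift : ∑ j ∈ range W, f (m + W - ↑(j + 1)) = ∑ j ∈ range W, f (m + W - 1 - j) :=
      sum_congr rfl fun j _ => congrArg f (by push_cast; abel)
    rw [sum_range_succ', hshift, hf, zero_add, Nat.cast_zero, sub_zero]
  rw [← hsplit_first, hsplit_last]

theorem Function.Periodic.eq_of_isUnit {N : ℕ} {β : Type*} {f : ZMod N → β} {c : ZMod N}
    (hf : Function.Periodic f c) (hc : IsUnit c) (a b : ZMod N) : f a = f b := by
  obtain ⟨k, hk⟩ := ZMod.intCast_surjective ((b - a) * (↑hc.unit⁻¹ : ZMod N))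
  have hb : b = a + k • c := by
    rw [zsmul_eq_mul, hk, mul_assoc, hc.val_inv_mul, mul_one, add_sub_cancel]
  rw [hb, hf.zsmul k a]

theorem ZMod.eq_zero_of_sum_range_sub_eq_zero {N W : ℕ} {M : Type*} [AddCommGroup M]
    [IsAddTorsionFree M] (hW : 0 < W) (hcop : Nat.Coprime N W) {f : ZMod N → M}
    (hf : ∀ m, ∑ j ∈ range W, f (m - j) = 0) (n : ZMod N) : f n = 0 := by
  have hconst : ∀ a, f a = f n := fun a =>
    (Function.periodic_of_sum_range_sub_eq_zero hf).eq_of_isUnit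
      ((ZMod.isUnit_iff_coprime W N).2 hcop.symm) a n
  have hsum : W • f n = 0 := by
    rw [← hf n, sum_congr rfl fun (j : ℕ) _ => hconst (n - j), sum_const, card_range]
  exact nsmul_right_injective hW.ne' (hsum.trans (smul_zero W).symm)

theorem abs_eq_of_window_energy_eq_general (N W : ℕ) (hW : 0 < W)
    (hcop : Nat.Coprime N W) (x x' : ZMod N → ℂ)
    (h : ∀ m : ZMod N,
      ∑ j ∈ Finset.range W, ‖x (m - (j : ZMod N))‖ ^ 2 =
        ∑ j ∈ Finset.range W, ‖x' (m - (j : ZMod N))‖ ^ 2) :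
    ∀ n : ZMod N, ‖x n‖ = ‖x' n‖ := by
  intro n
  have hdiff : ∀ m : ZMod N, ∑ j ∈ range W, (‖x (m - j)‖ ^ 2 - ‖x' (m - j)‖ ^ 2) = 0 := by
    intro m
    rw [sum_sub_distrib, h m, sub_self]
  have hsq := sub_eq_zero.1 <|
    ZMod.eq_zero_of_sum_range_sub_eq_zero (f := fun m => ‖x m‖ ^ 2 - ‖x' m‖ ^ 2) hW hcop hdiff n
  exact (pow_left_inj₀ (norm_nonneg _) (norm_nonneg _) two_ne_zero).1 hsq

/-- Magnitude recovery: if `gcd(N,W)=1`, `W ≤ N`, and the sliding sums of `|x|²` over every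
length-`W` window agree with those of `|x'|²`, then `|x[n]| = |x'[n]|` for all `n`. -/
theorem abs_eq_of_window_energy_eq (N W : ℕ) (hW : 0 < W) (hWN : W ≤ N)
    (hcop : Nat.Coprime N W) [NeZero N] (x x' : ZMod N → ℂ)
    (h : ∀ m : ZMod N,
      ∑ j ∈ Finset.range W, ‖x (m - (j : ZMod N))‖ ^ 2 =
        ∑ j ∈ Finset.range W, ‖x' (m - (j : ZMod N))‖ ^ 2) :
    ∀ n : ZMod N, ‖x n‖ = ‖x' n‖ :=
  abs_eq_of_window_energy_eq_general N W hW hcop x x' h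
end

section
/- Let N, W ≥ 2 with N ≥ 2W - 1, let g : Z/NZ → C be supported in the interval [a, a+W-1] (mod N) with g[a] ≠ 0 and g[a+W-1] ≠ 0. Then for every x : Z/NZ → C and every m, the autocorrelation value r_m[W-1] = Σ_{p=0}^{N-1} x[p] g[m-p] · conj(x[p-(W-1)] g[m-p+W-1]) equals x[m-a] g[a] · conj(x[m-a-W+1] g[a+W-1]). -/
open Finset

/-- Since `2 * W - 1 ≤ N`, the offsets `j + (W - 1)` and `k` (with `j, k < W`) stay below `N`, so
their congruence mod `N` is an equality of naturals, which forces `j = 0`. -/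
theorem eq_of_apply_ne_zero_of_apply_add_ne_zero {M : Type*} [Zero M] {N W : ℕ}
    (hN : 2 * W - 1 ≤ N) {a : ZMod N} {g : ZMod N → M}
    (hsupp : ∀ n : ZMod N, g n ≠ 0 → ∃ j : ℕ, j < W ∧ n = a + (j : ZMod N))
    {n : ZMod N} (hn : g n ≠ 0) (hn' : g (n + ((W - 1 : ℕ) : ZMod N)) ≠ 0) : n = a := by
  obtain ⟨j, hj, rfl⟩ := hsupp n hn
  obtain ⟨k, hk, hjk⟩ := hsupp _ hn'
  have hcast : ((j + (W - 1) : ℕ) : ZMod N) = (k : ZMod N) := by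
    push_cast
    rwa [add_assoc, add_right_inj] at hjk
  have hjk : j + (W - 1) = k :=
    ((ZMod.natCast_eq_natCast_iff _ _ _).1 hcast).eq_of_lt_of_lt (by omega) (by omega)
  obtain rfl : j = 0 := by omega
  simp

theorem autocorrelation_collapse_general (N W : ℕ) (hN : 2 * W - 1 ≤ N) [NeZero N]
    (a : ZMod N) (g : ZMod N → ℂ)
    (hsupp : ∀ n : ZMod N, g n ≠ 0 → ∃ j : ℕ, j < W ∧ n = a + (j : ZMod N)) :
    ∀ (x : ZMod N → ℂ) (m : ZMod N),
      ∑ p : ZMod N, x p * g (m - p) *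
          (starRingEnd ℂ) (x (p - ((W - 1 : ℕ) : ZMod N)) * g (m - p + ((W - 1 : ℕ) : ZMod N))) =
        x (m - a) * g a *
          (starRingEnd ℂ) (x (m - a - ((W - 1 : ℕ) : ZMod N)) * g (a + ((W - 1 : ℕ) : ZMod N))) := by
  intro x m
  rw [sum_eq_single_of_mem (m - a) (mem_univ _) fun p _ hp => ?_, sub_sub_cancel]
  have hwindow : g (m - p) = 0 ∨ g (m - p + ((W - 1 : ℕ) : ZMod N)) = 0 := by
    by_contra! h
    have hstart := eq_of_apply_ne_zero_of_apply_add_ne_zero hN hsupp h.1 h.2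
    exact hp (by rw [← hstart, sub_sub_cancel])
  rcases hwindow with h | h <;> simp [h]

/-- The lag-`(W-1)` autocorrelation of the windowed signal collapses to a single term. -/
theorem autocorrelation_collapse (N W : ℕ) (hW : 2 ≤ W) (hN : 2 * W - 1 ≤ N) [NeZero N]
    (a : ZMod N) (g : ZMod N → ℂ)
    (hsupp : ∀ n : ZMod N, g n ≠ 0 → ∃ j : ℕ, j < W ∧ n = a + (j : ZMod N))
    (ha : g a ≠ 0) (hb : g (a + ((W - 1 : ℕ) : ZMod N)) ≠ 0) :
    ∀ (x : ZMod N → ℂ) (m : ZMod N),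
      ∑ p : ZMod N, x p * g (m - p) *
          (starRingEnd ℂ) (x (p - ((W - 1 : ℕ) : ZMod N)) * g (m - p + ((W - 1 : ℕ) : ZMod N))) =
        x (m - a) * g a *
          (starRingEnd ℂ) (x (m - a - ((W - 1 : ℕ) : ZMod N)) * g (a + ((W - 1 : ℕ) : ZMod N))) :=
  autocorrelation_collapse_general N W hN a g hsupp
end

section
/- Let g : Z/NZ → C be a window supported in an interval of length W ≥ 2, with N ≥ 2W-1, gcd(N, W-1) = 1, and such that the length-N DFT of n ↦ |g[n]|² is nowhere vanishing. If x, x' : Z/NZ → C are both nowhere vanishing and |X_g(m,k)| = |X'_g(m,k)| for all m, k ∈ {0,...,N-1}, where X_g(m,k) = Σ_{n=0}^{N-1} x[n] g[m-n] e^{-2πi kn/N}, then there exists c ∈ C with |c| = 1 such that x'[n] = c · x[n] for all n. -/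
open Complex Finset

/-- The STFT with hop length `L = 1`. -/
noncomputable def stft1 (N : ℕ) [NeZero N] (g x : ZMod N → ℂ) (m k : ZMod N) : ℂ :=
  ∑ n : ZMod N, x n * g (m - n) *
    Complex.exp (-2 * (Real.pi : ℂ) * Complex.I * (k.val : ℂ) * (n.val : ℂ) / (N : ℂ))

/-!
By the Wiener–Khinchin identity, `|X_g(m, ·)|` determines, for every `m`, the circular
autocorrelation of `n ↦ x[n] g[m - n]`. At lag `0` this autocorrelation is the convolution of
`|x|²` with `|g|²`, which determines `|x|` because the DFT of `|g|²` never vanishes. At lag `W - 1`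
the support condition on `g` (with no wrap-around, as `N ≥ 2W - 1`) leaves the single term
`x[n] conj(x[n - W + 1]) g[a] conj(g[a + W - 1])`, so the products `x[n] conj(x[n - W + 1])` are
determined too. Hence the unimodular ratio `x' / x` is invariant under translation by `W - 1`,
which generates `ℤ/Nℤ` since `gcd(N, W - 1) = 1`.
-/

open scoped ComplexConjugate

namespace ZMod

variable {N : ℕ} [NeZero N]

lemma dft_apply_eq_sum_exp (f : ZMod N → ℂ) (k : ZMod N) :
    𝓕 f k = ∑ n, f n * exp (-2 * (Real.pi : ℂ) * I * (k.val : ℂ) * (n.val : ℂ) / (N : ℂ)) := by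
  refine Finset.sum_congr rfl fun n _ => ?_
  have : -(n * k) = (((-(n.val * k.val : ℤ)) : ℤ) : ZMod N) := by simp
  rw [smul_eq_mul, mul_comm, this, stdAddChar_coe]
  push_cast
  ring_nf

lemma conj_stdAddChar (t : ZMod N) : conj (stdAddChar t) = stdAddChar (-t) := by
  rw [stdAddChar_apply, stdAddChar_apply, AddChar.map_neg_eq_inv, Circle.coe_inv_eq_conj]

lemma dft_convolution (f G : ZMod N → ℂ) (k : ZMod N) :
    𝓕 (fun m => ∑ n, f n * G (m - n)) k = 𝓕 f k * 𝓕 G k := by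
  simp only [dft_apply, smul_eq_mul, Finset.mul_sum, Finset.sum_mul_sum (s := univ)]
  rw [Finset.sum_comm]
  refine Finset.sum_congr rfl fun n _ => ?_
  rw [← Equiv.sum_comp (Equiv.addRight n)]
  refine Finset.sum_congr rfl fun u _ => ?_
  simp only [Equiv.coe_addRight, add_sub_cancel_right, add_mul, neg_add, AddChar.map_add_eq_mul]
  ring

lemma dft_conj_neg (f : ZMod N → ℂ) (k : ZMod N) :
    𝓕 (fun n => conj (f (-n))) k = conj (𝓕 f k) := by
  simp only [dft_apply, smul_eq_mul, map_sum, map_mul, conj_stdAddChar]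
  rw [← Equiv.sum_comp (Equiv.neg _)]
  simp only [Equiv.neg_apply, neg_neg, neg_mul]

lemma eq_of_convolution_eq {G : ZMod N → ℂ} (hG : ∀ k, 𝓕 G k ≠ 0) {f f' : ZMod N → ℂ}
    (h : ∀ m, ∑ n, f n * G (m - n) = ∑ n, f' n * G (m - n)) : f = f' :=
  dft.injective <| funext fun k =>
    mul_right_cancel₀ (hG k) (by rw [← dft_convolution, ← dft_convolution, funext h])

def autocorr (f : ZMod N → ℂ) (ℓ : ZMod N) : ℂ := ∑ n, f n * conj (f (n - ℓ))

lemma dft_autocorr (f : ZMod N → ℂ) (k : ZMod N) : 𝓕 (autocorr f) k = (‖𝓕 f k‖ ^ 2 : ℂ) := by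
  have h := dft_convolution f (fun t => conj (f (-t))) k
  simp only [neg_sub] at h
  rwa [dft_conj_neg, mul_conj'] at h

lemma autocorr_eq_of_norm_dft_eq {f f' : ZMod N → ℂ} (h : ∀ k, ‖𝓕 f k‖ = ‖𝓕 f' k‖) :
    autocorr f = autocorr f' :=
  dft.injective <| funext fun k => by rw [dft_autocorr, dft_autocorr, h]

end ZMod

open ZMod

lemma eq_of_window_ne_zero {N W : ℕ} (hN : 2 * W - 1 ≤ N) {a : ZMod N} {g : ZMod N → ℂ}
    (hsupp : ∀ n : ZMod N, g n ≠ 0 → ∃ j : ℕ, j < W ∧ n = a + (j : ZMod N)) {t : ZMod N}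
    (ht : g t ≠ 0) (htL : g (t + ((W - 1 : ℕ) : ZMod N)) ≠ 0) : t = a := by
  obtain ⟨j, hj, rfl⟩ := hsupp t ht
  obtain ⟨j', hj', hjj'⟩ := hsupp _ htL
  have hcast : ((j + (W - 1) : ℕ) : ZMod N) = (j' : ZMod N) := by
    push_cast
    linear_combination hjj'
  rw [natCast_eq_natCast_iff', Nat.mod_eq_of_lt (by omega), Nat.mod_eq_of_lt (by omega)] at hcast
  obtain rfl : j = 0 := by omega
  simp

lemma Function.Periodic.apply_eq_apply_zero_of_isUnit {N : ℕ} [NeZero N] {α : Type*}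
    {f : ZMod N → α} {c : ZMod N} (hf : Function.Periodic f c) (hc : IsUnit c) (n : ZMod N) :
    f n = f 0 := by
  obtain ⟨u, rfl⟩ := hc
  have := hf.nat_mul_eq (n * ↑u⁻¹).val
  rwa [natCast_zmod_val, mul_assoc, Units.inv_mul, mul_one] at this

section STFT

variable {N : ℕ} [NeZero N]

lemma stft1_eq_dft (g x : ZMod N → ℂ) (m : ZMod N) :
    stft1 N g x m = 𝓕 (fun n => x n * g (m - n)) := by
  ext k
  rw [dft_apply_eq_sum_exp]
  rfl

lemma norm_eq_of_autocorr_zero_eq {g x x' : ZMod N → ℂ}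
    (hg : ∀ k, 𝓕 (fun n => (‖g n‖ ^ 2 : ℂ)) k ≠ 0)
    (h : ∀ m, autocorr (fun n => x n * g (m - n)) 0 = autocorr (fun n => x' n * g (m - n)) 0)
    (n : ZMod N) : ‖x n‖ = ‖x' n‖ := by
  have hsq (y : ZMod N → ℂ) (m : ZMod N) :
      autocorr (fun n => y n * g (m - n)) 0 = ∑ n, (‖y n‖ ^ 2 : ℂ) * (‖g (m - n)‖ ^ 2 : ℂ) := by
    refine Finset.sum_congr rfl fun n _ => ?_
    rw [sub_zero, map_mul, mul_mul_mul_comm, mul_conj', mul_conj']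
  have hxx' := congrFun (eq_of_convolution_eq hg fun m => by simpa only [hsq] using h m) n
  exact (pow_left_inj₀ (norm_nonneg _) (norm_nonneg _) two_ne_zero).mp (by exact_mod_cast hxx')

lemma autocorr_window_lag {W : ℕ} (hN : 2 * W - 1 ≤ N) {a : ZMod N} {g : ZMod N → ℂ}
    (hsupp : ∀ n : ZMod N, g n ≠ 0 → ∃ j : ℕ, j < W ∧ n = a + (j : ZMod N))
    (y : ZMod N → ℂ) (n : ZMod N) :
    autocorr (fun p => y p * g (n + a - p)) ((W - 1 : ℕ) : ZMod N) =
      y n * conj (y (n - ((W - 1 : ℕ) : ZMod N))) *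
        (g a * conj (g (a + ((W - 1 : ℕ) : ZMod N)))) := by
  set L : ZMod N := ((W - 1 : ℕ) : ZMod N)
  rw [autocorr, Finset.sum_eq_single n]
  · rw [show n + a - (n - L) = a + L by ring, add_sub_cancel_left, map_mul]
    ring
  · intro p _ hp
    have hpa : n + a - p ≠ a := fun h => hp (by linear_combination -h)
    rw [show n + a - (p - L) = n + a - p + L by ring, map_mul]
    by_cases h1 : g (n + a - p) = 0
    · simp [h1]
    · have h2 : g (n + a - p + L) = 0 := by
        by_contra h2
        exact hpa (eq_of_window_ne_zero hN hsupp h1 h2)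
      simp [h2]
  · simp

lemma exists_unimodular_of_lag_eq {x x' : ZMod N → ℂ} {L : ZMod N} (hL : IsUnit L)
    (hx : ∀ n, x n ≠ 0) (hnorm : ∀ n, ‖x n‖ = ‖x' n‖)
    (hlag : ∀ n, x n * conj (x (n - L)) = x' n * conj (x' (n - L))) :
    ∃ c : ℂ, ‖c‖ = 1 ∧ ∀ n, x' n = c * x n := by
  have hr : Function.Periodic (fun n => x' n / x n) L := by
    intro t
    have hsq : x' t * conj (x' t) = x t * conj (x t) := by rw [mul_conj', mul_conj', hnorm]
    have h := hlag (t + L)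
    rw [add_sub_cancel_right] at h
    rw [div_eq_div_iff (hx _) (hx _)]
    apply mul_right_cancel₀ ((map_ne_zero (starRingEnd ℂ)).mpr (hx t))
    linear_combination (-x' (t + L)) * hsq - x' t * h
  refine ⟨x' 0 / x 0, by rw [norm_div, ← hnorm, div_self (norm_ne_zero_iff.mpr (hx 0))],
    fun n => ?_⟩
  rw [← hr.apply_eq_apply_zero_of_isUnit hL n, div_mul_cancel₀ _ (hx n)]

end STFT

theorem stft_phase_retrieval_uniqueness_general (N W : ℕ) (hN : 2 * W - 1 ≤ N) [NeZero N]
    (hcop : Nat.Coprime N (W - 1)) (a : ZMod N) (g : ZMod N → ℂ)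
    (hsupp : ∀ n : ZMod N, g n ≠ 0 → ∃ j : ℕ, j < W ∧ n = a + (j : ZMod N))
    (ha : g a ≠ 0) (hb : g (a + ((W - 1 : ℕ) : ZMod N)) ≠ 0)
    (hdft : ∀ k : ZMod N,
      (∑ n : ZMod N, (‖g n‖ ^ 2 : ℂ) *
        Complex.exp (-2 * (Real.pi : ℂ) * Complex.I * (k.val : ℂ) * (n.val : ℂ) / (N : ℂ))) ≠ 0)
    (x x' : ZMod N → ℂ) (hx : ∀ n, x n ≠ 0)
    (hmag : ∀ m k : ZMod N, ‖stft1 N g x m k‖ = ‖stft1 N g x' m k‖) :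
    ∃ c : ℂ, ‖c‖ = 1 ∧ ∀ n : ZMod N, x' n = c * x n := by
  have hac (m : ZMod N) :
      autocorr (fun n => x n * g (m - n)) = autocorr (fun n => x' n * g (m - n)) :=
    autocorr_eq_of_norm_dft_eq fun k => by simpa only [stft1_eq_dft] using hmag m k
  have hg (k : ZMod N) : 𝓕 (fun n => (‖g n‖ ^ 2 : ℂ)) k ≠ 0 := by
    rw [dft_apply_eq_sum_exp]
    exact hdft k
  have hnorm := norm_eq_of_autocorr_zero_eq hg fun m => congrFun (hac m) 0
  have hlag (n : ZMod N) : x n * conj (x (n - ((W - 1 : ℕ) : ZMod N))) =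
      x' n * conj (x' (n - ((W - 1 : ℕ) : ZMod N))) := by
    have h := congrFun (hac (n + a)) ((W - 1 : ℕ) : ZMod N)
    rw [autocorr_window_lag hN hsupp, autocorr_window_lag hN hsupp] at h
    exact mul_right_cancel₀ (mul_ne_zero ha ((map_ne_zero _).mpr hb)) h
  exact exists_unimodular_of_lag_eq ((isUnit_iff_coprime _ _).mpr hcop.symm) hx hnorm hlag

/-- Uniqueness of STFT phase retrieval (hop `L = 1`) for nonvanishing signals:
if `g` is supported in an interval `[a, a+W-1]` with nonzero endpoint values (so the window
length is exactly `W ≥ 2`), `N ≥ 2W-1`, `gcd(N, W-1) = 1`, and the DFT of `|g|²` is nowhere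
vanishing, then equal STFT magnitudes imply equality up to a unimodular global phase. -/
theorem stft_phase_retrieval_uniqueness (N W : ℕ) (hW : 2 ≤ W) (hN : 2 * W - 1 ≤ N) [NeZero N]
    (hcop : Nat.Coprime N (W - 1)) (a : ZMod N) (g : ZMod N → ℂ)
    (hsupp : ∀ n : ZMod N, g n ≠ 0 → ∃ j : ℕ, j < W ∧ n = a + (j : ZMod N))
    (ha : g a ≠ 0) (hb : g (a + ((W - 1 : ℕ) : ZMod N)) ≠ 0)
    (hdft : ∀ k : ZMod N,
      (∑ n : ZMod N, (‖g n‖ ^ 2 : ℂ) *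
        Complex.exp (-2 * (Real.pi : ℂ) * Complex.I * (k.val : ℂ) * (n.val : ℂ) / (N : ℂ))) ≠ 0)
    (x x' : ZMod N → ℂ) (hx : ∀ n, x n ≠ 0) (hx' : ∀ n, x' n ≠ 0)
    (hmag : ∀ m k : ZMod N, ‖stft1 N g x m k‖ = ‖stft1 N g x' m k‖) :
    ∃ c : ℂ, ‖c‖ = 1 ∧ ∀ n : ZMod N, x' n = c * x n :=
  stft_phase_retrieval_uniqueness_general N W hN hcop a g hsupp ha hb hdft x x' hx hmag
end

section
/- Let N ≥ 2, and suppose x, x' : Z/NZ → C are nowhere vanishing with |x[n]| = |x'[n]| for all n, and x[n]·conj(x[n-d]) = x'[n]·conj(x'[n-d]) for all n ∈ Z/NZ, where gcd(N, d) = 1. Then there exists a unimodular constant c with x'[n] = c·x[n] for all n. -/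
/-!
The ratio `r n = x' n / x n` is unimodular, and equality of the stride-`d` products says exactly
that `r` is `d`-periodic. Since `d` is a unit of `ZMod N`, its multiples exhaust `ZMod N`, so `r`
is constant.
-/

open ComplexConjugate

theorem Function.Periodic.eq_zero_of_isUnit {α : Type*} {N : ℕ} {f : ZMod N → α} {d : ZMod N}
    (hf : Function.Periodic f d) (hd : IsUnit d) (n : ZMod N) : f n = f 0 := by
  obtain ⟨u, rfl⟩ := hd
  have hn : n = (ZMod.cast (n * ↑u⁻¹ : ZMod N) : ℤ) • (u : ZMod N) := by
    rw [zsmul_eq_mul, ZMod.intCast_zmod_cast, mul_assoc, Units.inv_mul, mul_one]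
  rw [hn, hf.zsmul_eq]

theorem Complex.div_eq_div_of_mul_conj_eq {a a' b b' : ℂ} (ha : a ≠ 0) (hb : b ≠ 0)
    (hnorm : ‖b‖ = ‖b'‖) (h : a * conj b = a' * conj b') : a' / a = b' / b := by
  have hb' : b' ≠ 0 := norm_ne_zero_iff.mp (hnorm ▸ norm_ne_zero_iff.mpr hb)
  have hunit : ‖b / b'‖ = 1 := by rw [norm_div, hnorm, div_self (norm_ne_zero_iff.mpr hb')]
  calc a' / a = conj (b / b') := by
        rw [map_div₀, div_eq_div_iff ha (by simpa using hb'), ← h, mul_comm]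
    _ = (b / b')⁻¹ := (Complex.inv_eq_conj hunit).symm
    _ = b' / b := inv_div b b'

theorem eq_up_to_phase_of_abs_and_stride_products_general (N d : ℕ)
    (hcop : Nat.Coprime N d) (x x' : ZMod N → ℂ)
    (hx : ∀ n : ZMod N, x n ≠ 0)
    (habs : ∀ n : ZMod N, ‖x n‖ = ‖x' n‖)
    (hprod : ∀ n : ZMod N,
      x n * (starRingEnd ℂ) (x (n - (d : ZMod N))) =
        x' n * (starRingEnd ℂ) (x' (n - (d : ZMod N)))) :
    ∃ c : ℂ, ‖c‖ = 1 ∧ ∀ n : ZMod N, x' n = c * x n := by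
  set r : ZMod N → ℂ := fun n => x' n / x n
  have hperiodic : Function.Periodic r d := fun n =>
    Complex.div_eq_div_of_mul_conj_eq (hx (n + d)) (hx n) (habs n) (by simpa using hprod (n + d))
  have hunit : IsUnit (d : ZMod N) := (ZMod.isUnit_iff_coprime d N).mpr hcop.symm
  refine ⟨r 0, ?_, fun n => ?_⟩
  · rw [norm_div, ← habs, div_self (norm_ne_zero_iff.mpr (hx 0))]
  · rw [← hperiodic.eq_zero_of_isUnit hunit n, div_mul_cancel₀ _ (hx n)]

/-- Phase propagation: if two nowhere-vanishing signals have equal magnitudes and equal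
relative products at a stride `d` coprime to `N`, they agree up to a unimodular constant. -/
theorem eq_up_to_phase_of_abs_and_stride_products (N d : ℕ) (hN : 2 ≤ N)
    (hcop : Nat.Coprime N d) [NeZero N] (x x' : ZMod N → ℂ)
    (hx : ∀ n : ZMod N, x n ≠ 0) (hx' : ∀ n : ZMod N, x' n ≠ 0)
    (habs : ∀ n : ZMod N, ‖x n‖ = ‖x' n‖)
    (hprod : ∀ n : ZMod N,
      x n * (starRingEnd ℂ) (x (n - (d : ZMod N))) =
        x' n * (starRingEnd ℂ) (x' (n - (d : ZMod N)))) :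
    ∃ c : ℂ, ‖c‖ = 1 ∧ ∀ n : ZMod N, x' n = c * x n :=
  eq_up_to_phase_of_abs_and_stride_products_general N d hcop x x' hx habs hprod
end
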